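/- On R^4, define P with nonzero entries P^{12} = p12, P^{24} = p24, P^{34} = p34, and P' with nonzero entries P'^{12} = a21 x1, P'^{24} = p'_{24} + a61 x1 + a63 x3, P'^{34} = a73 x3 (all constants real). Then [P,P] = 0, [P',P'] = 0 and [P,P'] = 0, i.e., P and P' are compatible Poisson structures, and if p12 p34 ≠ 0 the functions H1 = a21 x1/p12 + a73 x3/p34 and H2 = a21^2 x1^2/(2 p12^2) + a73^2 x3^2/(2 p34^2) satisfy {H1,H2} = {H1,H2}' = 0. -/

import Mathlib

open scoped BigOperators

noncomputable def pd {m : ℕ} (μ : Fin m) (f : (Fin m → ℝ) → ℝ) (x : Fin m → ℝ) : ℝ :=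
  fderiv ℝ f x (Pi.single μ 1)

/-- Poisson bracket associated to a bivector field `P`. -/
noncomputable def pbrk {m : ℕ} (P : (Fin m → ℝ) → Fin m → Fin m → ℝ)
    (f g : (Fin m → ℝ) → ℝ) (x : Fin m → ℝ) : ℝ :=
  ∑ μ, ∑ ν, P x μ ν * pd μ f x * pd ν g x

/-- Schouten bracket `[P,P]^{λμν}`. -/
noncomputable def schouten {m : ℕ} (P : (Fin m → ℝ) → Fin m → Fin m → ℝ)
    (l μ ν : Fin m) (x : Fin m → ℝ) : ℝ :=
  ∑ ρ, (P x ρ l * pd ρ (fun y => P y μ ν) x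
      + P x ρ ν * pd ρ (fun y => P y l μ) x
      + P x ρ μ * pd ρ (fun y => P y ν l) x)

/-- Mixed Schouten bracket `[P,Q]^{λμν}`. -/
noncomputable def schoutenMixed {m : ℕ} (P Q : (Fin m → ℝ) → Fin m → Fin m → ℝ)
    (l μ ν : Fin m) (x : Fin m → ℝ) : ℝ :=
  ∑ ρ, (P x ρ l * pd ρ (fun y => Q y μ ν) x + Q x ρ l * pd ρ (fun y => P y μ ν) x
      + P x ρ ν * pd ρ (fun y => Q y l μ) x + Q x ρ ν * pd ρ (fun y => P y l μ) x
      + P x ρ μ * pd ρ (fun y => Q y ν l) x + Q x ρ μ * pd ρ (fun y => P y ν l) x)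

/-- The Poisson bivector `P` on the group `A_2 ⊕ A_2`. -/
noncomputable def PA2A2 (p12 p24 p34 : ℝ) : (Fin 4 → ℝ) → Fin 4 → Fin 4 → ℝ :=
  fun _ μ ν =>
    !![0, p12, 0, 0;
       -p12, 0, 0, p24;
       0, 0, 0, p34;
       0, -p24, -p34, 0] μ ν

/-- The Poisson bivector `P'` on the group `A_2 ⊕ A_2`. -/
noncomputable def PA2A2' (p24' a21 a61 a63 a73 : ℝ) : (Fin 4 → ℝ) → Fin 4 → Fin 4 → ℝ :=
  fun x μ ν =>
    let A := a21 * x 0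
    let B := p24' + a61 * x 0 + a63 * x 2
    let C := a73 * x 2
    !![0, A, 0, 0;
       -A, 0, 0, B;
       0, 0, 0, C;
       0, -B, -C, 0] μ ν

/-! Both bivectors are affine in the coordinates, so their partial derivatives are constant and
the Schouten brackets reduce to polynomial identities in the entries. The functions `H1`, `H2`
depend only on `x 0` and `x 2`, and these two coordinates Poisson-commute for both structures. -/

open Finset

section PartialDerivatives

variable {m : ℕ}

theorem pd_eq_zero_of_dependsOn {f : (Fin m → ℝ) → ℝ} {S : Set (Fin m)} (hf : DependsOn f S)
    {μ : Fin m} (hμ : μ ∉ S) (x : Fin m → ℝ) : pd μ f x = 0 := by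
  by_cases hd : DifferentiableAt ℝ f x
  · have hline : (fun t : ℝ => f (x + t • Pi.single μ 1)) = fun _ => f x := by
      funext t
      refine hf fun i hi => ?_
      simp [ne_of_mem_of_not_mem hi hμ]
    rw [pd, ← hd.lineDeriv_eq_fderiv, lineDeriv, hline, deriv_const]
  · simp [pd, fderiv_zero_of_not_differentiableAt hd]

theorem pd_const_add_sum_mul (c : ℝ) (d : Fin m → ℝ) (ρ : Fin m) (x : Fin m → ℝ) :
    pd ρ (fun y => c + ∑ k, y k * d k) x = d ρ := by
  have hL := (HasFDerivAt.fun_sum (u := univ) (A := fun k (y : Fin m → ℝ) => y k * d k)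
    fun k _ => (hasFDerivAt_apply (𝕜 := ℝ) k x).mul_const (d k)).const_add c
  rw [pd, hL.fderiv]
  simp [Pi.single_apply]

end PartialDerivatives

section AffineBivectors

variable {m : ℕ} {P Q : (Fin m → ℝ) → Fin m → Fin m → ℝ} {D E : Fin m → Fin m → Fin m → ℝ}

/-- `D ρ μ ν` plays the role of the constant partial derivative `∂_ρ P^{μν}`. -/
def HasAffineEntries (P : (Fin m → ℝ) → Fin m → Fin m → ℝ) (D : Fin m → Fin m → Fin m → ℝ) :
    Prop :=
  ∀ y μ ν, P y μ ν = P 0 μ ν + ∑ k, y k * D k μ ν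

theorem HasAffineEntries.pd_apply (hP : HasAffineEntries P D) (ρ μ ν : Fin m)
    (x : Fin m → ℝ) : pd ρ (fun y => P y μ ν) x = D ρ μ ν := by
  rw [show (fun y => P y μ ν) = fun y => P 0 μ ν + ∑ k, y k * D k μ ν from
    funext fun y => hP y μ ν, pd_const_add_sum_mul]

theorem HasAffineEntries.schouten_eq (hP : HasAffineEntries P D) (l μ ν : Fin m)
    (x : Fin m → ℝ) :
    schouten P l μ ν x =
      ∑ ρ, (P x ρ l * D ρ μ ν + P x ρ ν * D ρ l μ + P x ρ μ * D ρ ν l) := by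
  simp only [schouten, hP.pd_apply]

theorem HasAffineEntries.schoutenMixed_eq (hP : HasAffineEntries P D)
    (hQ : HasAffineEntries Q E) (l μ ν : Fin m) (x : Fin m → ℝ) :
    schoutenMixed P Q l μ ν x =
      ∑ ρ, (P x ρ l * E ρ μ ν + Q x ρ l * D ρ μ ν + P x ρ ν * E ρ l μ + Q x ρ ν * D ρ l μ
        + P x ρ μ * E ρ ν l + Q x ρ μ * D ρ ν l) := by
  simp only [schoutenMixed, hP.pd_apply, hQ.pd_apply]

end AffineBivectors

theorem dependsOn_comp_pair {ι α β : Type*} (F : α → α → β) (i j : ι) :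
    DependsOn (fun y : ι → α => F (y i) (y j)) {i, j} := fun _ _ h => by
  simp only [h i (by simp), h j (by simp)]

theorem pbrk_eq_zero_of_dependsOn {m : ℕ} {P : (Fin m → ℝ) → Fin m → Fin m → ℝ}
    {f g : (Fin m → ℝ) → ℝ} {S : Set (Fin m)} {x : Fin m → ℝ}
    (hP : ∀ μ ∈ S, ∀ ν ∈ S, P x μ ν = 0) (hf : DependsOn f S) (hg : DependsOn g S) :
    pbrk P f g x = 0 := by
  refine sum_eq_zero fun μ _ => sum_eq_zero fun ν _ => ?_
  by_cases hμ : μ ∈ S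
  · by_cases hν : ν ∈ S
    · simp [hP μ hμ ν hν]
    · simp [pd_eq_zero_of_dependsOn hg hν]
  · simp [pd_eq_zero_of_dependsOn hf hμ]

section A2A2

variable (p12 p24 p34 p24' a21 a61 a63 a73 : ℝ)

theorem hasAffineEntries_PA2A2 : HasAffineEntries (PA2A2 p12 p24 p34) 0 := by
  simp [HasAffineEntries, PA2A2]

theorem hasAffineEntries_PA2A2' :
    HasAffineEntries (PA2A2' p24' a21 a61 a63 a73)
      (fun ρ => PA2A2' 0 a21 a61 a63 a73 (Pi.single ρ 1)) := by
  intro y μ ν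
  fin_cases μ <;> fin_cases ν <;> simp [PA2A2', Fin.sum_univ_four] <;> ring

theorem PA2A2_apply_eq_zero_of_mem (x : Fin 4 → ℝ) :
    ∀ μ ∈ ({0, 2} : Set (Fin 4)), ∀ ν ∈ ({0, 2} : Set (Fin 4)), PA2A2 p12 p24 p34 x μ ν = 0 := by
  simp [PA2A2]

theorem PA2A2'_apply_eq_zero_of_mem (x : Fin 4 → ℝ) :
    ∀ μ ∈ ({0, 2} : Set (Fin 4)), ∀ ν ∈ ({0, 2} : Set (Fin 4)),
      PA2A2' p24' a21 a61 a63 a73 x μ ν = 0 := by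
  simp [PA2A2']

theorem schouten_PA2A2' (l μ ν : Fin 4) (x : Fin 4 → ℝ) :
    schouten (PA2A2' p24' a21 a61 a63 a73) l μ ν x = 0 := by
  rw [(hasAffineEntries_PA2A2' p24' a21 a61 a63 a73).schouten_eq]
  fin_cases l <;> fin_cases μ <;> fin_cases ν <;> simp [PA2A2', Fin.sum_univ_four]

theorem schoutenMixed_PA2A2_PA2A2' (l μ ν : Fin 4) (x : Fin 4 → ℝ) :
    schoutenMixed (PA2A2 p12 p24 p34) (PA2A2' p24' a21 a61 a63 a73) l μ ν x = 0 := by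
  rw [(hasAffineEntries_PA2A2 p12 p24 p34).schoutenMixed_eq
    (hasAffineEntries_PA2A2' p24' a21 a61 a63 a73)]
  fin_cases l <;> fin_cases μ <;> fin_cases ν <;> simp [PA2A2, PA2A2', Fin.sum_univ_four]

end A2A2

theorem A2A2_compatible_and_involution (p12 p24 p34 p24' a21 a61 a63 a73 : ℝ) :
    ((∀ x l μ ν, schouten (PA2A2 p12 p24 p34) l μ ν x = 0) ∧
     (∀ x l μ ν, schouten (PA2A2' p24' a21 a61 a63 a73) l μ ν x = 0) ∧
     (∀ x l μ ν, schoutenMixed (PA2A2 p12 p24 p34)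
        (PA2A2' p24' a21 a61 a63 a73) l μ ν x = 0)) ∧
    (p12 * p34 ≠ 0 →
      let H1 : (Fin 4 → ℝ) → ℝ := fun x => a21 * x 0 / p12 + a73 * x 2 / p34
      let H2 : (Fin 4 → ℝ) → ℝ := fun x =>
        a21 ^ 2 * (x 0) ^ 2 / (2 * p12 ^ 2) + a73 ^ 2 * (x 2) ^ 2 / (2 * p34 ^ 2)
      (∀ x, pbrk (PA2A2 p12 p24 p34) H1 H2 x = 0) ∧
      (∀ x, pbrk (PA2A2' p24' a21 a61 a63 a73) H1 H2 x = 0)) := by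
  refine ⟨⟨fun x l μ ν => ?_, fun x l μ ν => schouten_PA2A2' p24' a21 a61 a63 a73 l μ ν x,
    fun x l μ ν => schoutenMixed_PA2A2_PA2A2' p12 p24 p34 p24' a21 a61 a63 a73 l μ ν x⟩, fun _ => ?_⟩
  · simp [(hasAffineEntries_PA2A2 p12 p24 p34).schouten_eq]
  have hH1 := dependsOn_comp_pair (fun a b => a21 * a / p12 + a73 * b / p34) (0 : Fin 4) 2
  have hH2 := dependsOn_comp_pair
    (fun a b => a21 ^ 2 * a ^ 2 / (2 * p12 ^ 2) + a73 ^ 2 * b ^ 2 / (2 * p34 ^ 2)) (0 : Fin 4) 2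
  exact ⟨fun x => pbrk_eq_zero_of_dependsOn (PA2A2_apply_eq_zero_of_mem p12 p24 p34 x) hH1 hH2,
    fun x => pbrk_eq_zero_of_dependsOn
      (PA2A2'_apply_eq_zero_of_mem p24' a21 a61 a63 a73 x) hH1 hH2⟩
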